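/- arXiv:1801.01992 — 3 statements merged into one kernel-verified Lean document; each statement's English description precedes it below -/
import Mathlib

section
/- Let (E,τ) be a real locally convex space such that every subset of E that is functionally bounded in the weak topology σ(E,E') has compact closure in the original topology τ. Then: (a) every subset of E compact in σ(E,E') is compact in τ; (b) every subset of E functionally bounded in σ(E,E') is functionally bounded in τ; and (c) E endowed with σ(E,E') is a μ-space, i.e. every functionally bounded subset of (E,σ(E,E')) has compact closure in σ(E,E'). -/
open Filter Topology Bornology

/-- The weak topology σ(E,E') on a (locally convex) topological vector space `E`:
the initial topology with respect to all continuous linear functionals on `E`. -/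
def weakTop (E : Type*) [AddCommGroup E] [Module ℝ E] [TopologicalSpace E] :
    TopologicalSpace E :=
  TopologicalSpace.induced (fun x (f : E →L[ℝ] ℝ) => f x) Pi.topologicalSpace

/-- A set `A` is functionally bounded for the topology `t` if every `t`-continuous
real-valued function is bounded on `A`. -/
def FunBounded {E : Type*} (t : TopologicalSpace E) (A : Set E) : Prop :=
  ∀ f : E → ℝ, @Continuous E ℝ t _ f → ∃ C : ℝ, ∀ x ∈ A, |f x| ≤ C

/-- The Schur property: every sequence converging in the weak topology σ(E,E') to a point
converges to that point in the original topology. -/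
def HasSchur (E : Type*) [AddCommGroup E] [Module ℝ E] [TopologicalSpace E] : Prop :=
  ∀ (u : ℕ → E) (a : E),
    Filter.Tendsto u Filter.atTop (@nhds E (weakTop E) a) →
    Filter.Tendsto u Filter.atTop (nhds a)

/-!
The hypothesis makes the `τ`-closure `K` of a weakly functionally bounded set `A` `τ`-compact,
hence weakly compact; (b) follows at once, and (c) because the weak topology is R1, so that
the weak closure of `A` is a closed subset of the compact set `closure[weak] K`. For (a), an
ultrafilter on a weakly compact `A` has a weak limit `a ∈ A` and a `τ`-limit `b ∈ K`; both are
weak limits, so `a` and `b` are weakly inseparable, and by Hahn–Banach weakly inseparable points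
of a locally convex space are `τ`-inseparable, so the ultrafilter also `τ`-converges to `a`.
-/

theorem funBounded_of_subset_isCompact {X : Type*} {t : TopologicalSpace X} {A K : Set X}
    (hK : @IsCompact X t K) (hAK : A ⊆ K) : FunBounded t A := by
  intro f hf
  obtain ⟨C, hC⟩ := hK.exists_bound_of_continuousOn hf.continuousOn
  exact ⟨C, fun x hx => hC x (hAK hx)⟩

theorem isCompact_of_isCompact_coarser {X : Type*} {t' : TopologicalSpace X}
    [t : TopologicalSpace X] [@R1Space X t'] (hle : t ≤ t')
    (hinsep : ∀ a b : X, @Inseparable X t' a b → Inseparable a b) {A : Set X}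
    (hA : @IsCompact X t' A) (hK : IsCompact (closure A)) : IsCompact A := by
  rw [isCompact_iff_ultrafilter_le_nhds]
  intro F hF
  obtain ⟨a, haA, hFa⟩ := (@isCompact_iff_ultrafilter_le_nhds X t' A).mp hA F hF
  obtain ⟨b, -, hFb⟩ := hK.ultrafilter_le_nhds F (hF.trans (principal_mono.2 subset_closure))
  have hab : @Inseparable X t' a b :=
    @tendsto_nhds_unique_inseparable X _ t' _ id F a b _ hFa (hFb.trans (_root_.nhds_mono hle))
  exact ⟨a, haA, (hinsep a b hab).nhds_eq ▸ hFb⟩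

section WeakTopology

variable {E : Type*} [AddCommGroup E] [Module ℝ E] [TopologicalSpace E]

theorem le_weakTop : ‹TopologicalSpace E› ≤ weakTop E :=
  continuous_iff_le_induced.mp (continuous_pi fun f => f.continuous)

theorem continuous_weakTop_clm (f : E →L[ℝ] ℝ) : @Continuous E ℝ (weakTop E) _ f :=
  @Continuous.comp E ((E →L[ℝ] ℝ) → ℝ) ℝ (weakTop E) _ _ _ _ (continuous_apply f)
    continuous_induced_dom

theorem IsCompact.isCompact_weakTop {K : Set E} (hK : IsCompact K) :
    @IsCompact E (weakTop E) K := by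
  simpa using @IsCompact.image E E _ (weakTop E) K id hK (continuous_id_of_le le_weakTop)

theorem r1Space_weakTop : @R1Space E (weakTop E) :=
  R1Space.induced _

theorem inseparable_of_forall_clm_eq [IsTopologicalAddGroup E] [ContinuousSMul ℝ E]
    [LocallyConvexSpace ℝ E] {a b : E} (hab : ∀ f : E →L[ℝ] ℝ, f a = f b) :
    Inseparable a b := by
  rw [addGroup_inseparable_iff]
  by_contra hnot
  obtain ⟨f, u, hf0, hfu⟩ :=
    geometric_hahn_banach_closed_point convex_zero.closure isClosed_closure hnot
  have h0 := hf0 0 (subset_closure rfl)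
  rw [map_sub, hab f, sub_self] at hfu
  rw [map_zero] at h0
  linarith

theorem inseparable_of_inseparable_weakTop [IsTopologicalAddGroup E] [ContinuousSMul ℝ E]
    [LocallyConvexSpace ℝ E] {a b : E} (hab : @Inseparable E (weakTop E) a b) :
    Inseparable a b :=
  inseparable_of_forall_clm_eq fun f =>
    (@Inseparable.map E ℝ (weakTop E) _ _ _ f hab (continuous_weakTop_clm f)).eq

end WeakTopology

/-- If every weakly functionally bounded subset of a real locally convex space
has compact closure in the original topology, then (a) `E` weakly respects compactness,
(b) `E` weakly respects functional boundedness, and (c) `E` with its weak topology is a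
μ-space. -/
theorem weakly_respects_of_weakly_funBounded_rel_compact
    (E : Type*) [AddCommGroup E] [Module ℝ E] [τ : TopologicalSpace E]
    [IsTopologicalAddGroup E] [ContinuousSMul ℝ E] [LocallyConvexSpace ℝ E]
    (h : ∀ A : Set E, FunBounded (weakTop E) A → IsCompact (closure A)) :
    (∀ A : Set E, @IsCompact E (weakTop E) A → IsCompact A) ∧
    (∀ A : Set E, FunBounded (weakTop E) A → FunBounded τ A) ∧
    (∀ A : Set E, FunBounded (weakTop E) A →
      @IsCompact E (weakTop E) (@closure E (weakTop E) A)) := by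
  refine ⟨fun A hA => ?_, fun A hA => funBounded_of_subset_isCompact (h A hA) subset_closure,
    fun A hA => ?_⟩
  · exact @isCompact_of_isCompact_coarser E (weakTop E) τ r1Space_weakTop le_weakTop
      (fun _ _ => inseparable_of_inseparable_weakTop) A hA
      (h A (funBounded_of_subset_isCompact hA subset_rfl))
  · exact @IsCompact.closure_of_subset E (weakTop E) r1Space_weakTop A (closure A)
      (h A hA).isCompact_weakTop subset_closure
end

section
/- Let (E,τ) be a real locally convex space such that E endowed with the weak topology σ(E,E') is a μ-space, (E,τ) is a μ-space, and every subset A of E that is not functionally bounded in (E,τ) contains an infinite subset B which is discrete and C-embedded in E endowed with σ(E,E'). Then every subset of E that is compact in σ(E,E') is compact in τ. -/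
open Filter Topology Bornology

/-- A subset `B` is discrete for the topology `t` if its `t`-subspace topology is discrete. -/
def DiscreteIn {E : Type*} (t : TopologicalSpace E) (B : Set E) : Prop :=
  @DiscreteTopology B (TopologicalSpace.induced (Subtype.val : B → E) t)

/-- A subset `B` is C-embedded for the topology `t` if every real-valued function that is
continuous on `B` (with the `t`-subspace topology) extends to a `t`-continuous function
on the whole space. -/
def CEmbeddedIn {E : Type*} (t : TopologicalSpace E) (B : Set E) : Prop :=
  ∀ f : B → ℝ,
    @Continuous B ℝ (TopologicalSpace.induced (Subtype.val : B → E) t) _ f →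
    ∃ g : E → ℝ, @Continuous E ℝ t _ g ∧ ∀ x : B, g x = f x

/-!
A weakly compact set `K` is functionally bounded for the weak topology, so it cannot contain an
infinite discrete C-embedded set (an unbounded function on such a set extends to the whole space);
hence `K` is functionally bounded in `E`, and its closure is compact. An ultrafilter on `K` then has
a weak limit `a ∈ K` and a limit `b` in `E`; all continuous functionals agree at `a` and `b`, which
by Hahn–Banach forces `b ⤳ a`, so the ultrafilter converges to `a` in `E` as well.
-/

section FunBounded

variable {X : Type*} {t : TopologicalSpace X}

theorem FunBounded.mono {A B : Set X} (hA : FunBounded t A) (hBA : B ⊆ A) : FunBounded t B :=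
  fun f hf => (hA f hf).imp fun _ hC x hx => hC x (hBA hx)

theorem IsCompact.funBounded {K : Set X} (hK : @IsCompact X t K) : FunBounded t K :=
  fun f hf => @IsCompact.exists_bound_of_continuousOn X ℝ _ t K hK f
    (@Continuous.continuousOn X ℝ t _ f K hf)

theorem not_funBounded_of_infinite_of_discreteIn_of_cEmbeddedIn {B : Set X} (hB : B.Infinite)
    (hB_disc : DiscreteIn t B) (hB_emb : CEmbeddedIn t B) : ¬ FunBounded t B := by
  intro hB_bdd
  obtain e := hB.natEmbedding
  let f : B → ℝ := Function.extend e (fun n => (n : ℝ)) 0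
  obtain ⟨g, hg, hgf⟩ :=
    hB_emb f (@continuous_of_discreteTopology B (t.induced Subtype.val) hB_disc ℝ _ f)
  obtain ⟨C, hC⟩ := hB_bdd g hg
  obtain ⟨n, hn⟩ := exists_nat_gt C
  have hgn : g (e n) = n := (hgf (e n)).trans (e.injective.extend_apply _ _ n)
  have := hC _ (e n).2
  rw [hgn, Nat.abs_cast] at this
  linarith

end FunBounded

section WeakTopology

variable {E : Type*} [AddCommGroup E] [Module ℝ E] [TopologicalSpace E]

theorem StrongDual.continuous_weakTop (f : StrongDual ℝ E) : Continuous[weakTop E, _] f :=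
  @Continuous.comp E (StrongDual ℝ E → ℝ) ℝ (weakTop E) _ _ (fun x g => g x) (fun p => p f)
    (continuous_apply f) continuous_induced_dom

variable [IsTopologicalAddGroup E] [ContinuousSMul ℝ E] [LocallyConvexSpace ℝ E]

theorem specializes_of_forall_dual_eq {a b : E} (hab : ∀ f : StrongDual ℝ E, f a = f b) :
    a ⤳ b := by
  rw [specializes_iff_mem_closure]
  by_contra hb
  obtain ⟨f, u, hfb, hfa⟩ :=
    geometric_hahn_banach_point_closed (convex_singleton a).closure isClosed_closure hb
  linarith [hfa a (subset_closure rfl), hab f]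

theorem isCompact_of_isCompact_weakTop_of_subset {K L : Set E} (hK : @IsCompact E (weakTop E) K)
    (hL : IsCompact L) (hKL : K ⊆ L) : IsCompact K := by
  rw [isCompact_iff_ultrafilter_le_nhds]
  intro F hF
  obtain ⟨a, haK, hFa⟩ := (@isCompact_iff_ultrafilter_le_nhds E (weakTop E) K).mp hK F hF
  obtain ⟨b, -, hFb⟩ := hL.ultrafilter_le_nhds F (hF.trans (principal_mono.mpr hKL))
  have hba : ∀ f : StrongDual ℝ E, f b = f a := fun f =>
    tendsto_nhds_unique ((f.continuous.tendsto b).mono_left hFb)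
      ((@Continuous.tendsto E ℝ (weakTop E) _ f f.continuous_weakTop a).mono_left hFa)
  exact ⟨a, haK, hFb.trans (specializes_of_forall_dual_eq hba)⟩

end WeakTopology

theorem weakly_respects_compactness_of_discrete_C_embedded_general
    (E : Type*) [AddCommGroup E] [Module ℝ E] [τ : TopologicalSpace E]
    [IsTopologicalAddGroup E] [ContinuousSMul ℝ E] [LocallyConvexSpace ℝ E]
    (hμ : ∀ A : Set E, FunBounded τ A → IsCompact (closure A))
    (h : ∀ A : Set E, ¬ FunBounded τ A →
      ∃ B ⊆ A, B.Infinite ∧ DiscreteIn (weakTop E) B ∧ CEmbeddedIn (weakTop E) B) :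
    ∀ K : Set E, @IsCompact E (weakTop E) K → IsCompact K := by
  intro K hK
  have hK_bdd : FunBounded τ K := by
    by_contra hK_unbdd
    obtain ⟨B, hBK, hB_inf, hB_disc, hB_emb⟩ := h K hK_unbdd
    exact not_funBounded_of_infinite_of_discreteIn_of_cEmbeddedIn hB_inf hB_disc hB_emb
      (hK.funBounded.mono hBK)
  exact isCompact_of_isCompact_weakTop_of_subset hK (hμ K hK_bdd) subset_closure

/-- Let `E` be a real locally convex space such that `E` and `E` with the
weak topology are μ-spaces, and every set which is not functionally bounded in `E` contains
an infinite subset which is discrete and C-embedded in the weak topology. Then every weakly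
compact subset of `E` is compact. -/
theorem weakly_respects_compactness_of_discrete_C_embedded
    (E : Type*) [AddCommGroup E] [Module ℝ E] [τ : TopologicalSpace E]
    [IsTopologicalAddGroup E] [ContinuousSMul ℝ E] [LocallyConvexSpace ℝ E]
    (hμw : ∀ A : Set E, FunBounded (weakTop E) A →
      @IsCompact E (weakTop E) (@closure E (weakTop E) A))
    (hμ : ∀ A : Set E, FunBounded τ A → IsCompact (closure A))
    (h : ∀ A : Set E, ¬ FunBounded τ A →
      ∃ B ⊆ A, B.Infinite ∧ DiscreteIn (weakTop E) B ∧ CEmbeddedIn (weakTop E) B) :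
    ∀ K : Set E, @IsCompact E (weakTop E) K → IsCompact K :=
  weakly_respects_compactness_of_discrete_C_embedded_general E (τ := τ) hμ h
end

section
/- Let (E,τ) be a real barrelled locally convex space. Then E has the Schur property if and only if every σ(E',E)-bounded subset A of the dual E' is an E-limited set, i.e. sup{|χ(x_n)| : χ ∈ A} → 0 as n → ∞ for every sequence {x_n} in E converging to 0 in the weak topology σ(E,E'). -/
/-!
For `χ` in a pointwise bounded set `A ⊆ E'`, the pointwise supremum `p = sup_{χ ∈ A} |χ|` is a
lower semicontinuous seminorm, hence continuous because `E` is barrelled; so if the Schur property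
turns a weakly null sequence into a null one, `p (x n) → 0` bounds `|χ (x n)|` uniformly on `A`.
Conversely, every continuous seminorm `p` is the supremum of `|χ|` over the weak* bounded set
`{χ | |χ| ≤ p}` by Hahn–Banach, so if that set is limited then `p (x n) → 0` along every weakly
null sequence, which is convergence in the locally convex topology.
-/

open Filter Topology Bornology

section

variable {E : Type*} [AddCommGroup E] [Module ℝ E] [TopologicalSpace E]

theorem tendsto_weakTop_iff {ι : Type*} {l : Filter ι} {u : ι → E} {a : E} :
    Tendsto u l (@nhds E (weakTop E) a) ↔
      ∀ f : E →L[ℝ] ℝ, Tendsto (fun i ↦ f (u i)) l (𝓝 (f a)) := by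
  rw [weakTop, nhds_induced, tendsto_comap_iff, tendsto_pi_nhds]
  rfl

theorem tendsto_sub_weakTop_zero {ι : Type*} {l : Filter ι} {u : ι → E} {a : E}
    (hu : Tendsto u l (@nhds E (weakTop E) a)) :
    Tendsto (fun i ↦ u i - a) l (@nhds E (weakTop E) 0) := by
  rw [tendsto_weakTop_iff] at hu ⊢
  intro f
  simpa using (hu f).sub_const (f a)

def IsLimited (A : Set (E →L[ℝ] ℝ)) : Prop :=
  ∀ x : ℕ → E, Tendsto x atTop (@nhds E (weakTop E) 0) →
    ∀ ε : ℝ, 0 < ε → ∃ N : ℕ, ∀ n ≥ N, ∀ χ ∈ A, |χ (x n)| ≤ ε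

theorem Seminorm.exists_strongDual_abs_le_of_continuous [PolynormableSpace ℝ E]
    {p : Seminorm ℝ E} (hp : Continuous p) (v : E) :
    ∃ χ : E →L[ℝ] ℝ, (∀ y, |χ y| ≤ p y) ∧ χ v = p v := by
  have hker (c : ℝ) (hc : c • v = 0) : c • p v = 0 := by
    have : ‖c‖ * p v = 0 := by rw [← map_smul_eq_mul, hc, map_zero]
    rcases mul_eq_zero.mp this with h | h
    · rw [norm_eq_zero.mp h, zero_smul]
    · rw [h, smul_zero]
  let f := LinearPMap.mkSpanSingleton' (σ := RingHom.id ℝ) v (p v) hker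
  have hfp (z : f.domain) : f z ≤ p z := by
    obtain ⟨z, hz⟩ := z
    obtain ⟨c, rfl⟩ := Submodule.mem_span_singleton.mp hz
    rw [LinearPMap.mkSpanSingleton'_apply, map_smul_eq_mul, smul_eq_mul, Real.norm_eq_abs]
    exact mul_le_mul_of_nonneg_right (le_abs_self c) (apply_nonneg p v)
  obtain ⟨χ, hχf, hχp⟩ :=
    Module.Dual.exists_continuous_extension_of_le_seminorm_real f.domain f.toFun hp hfp
  refine ⟨χ, hχp, ?_⟩
  have hv : v ∈ f.domain := Submodule.mem_span_singleton_self v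
  exact (hχf ⟨v, hv⟩).trans (LinearPMap.mkSpanSingleton'_apply_self v (p v) hker hv)

theorem BarrelledSpace.exists_continuous_seminorm_abs_le [BarrelledSpace ℝ E]
    {A : Set (E →L[ℝ] ℝ)} (hA : ∀ x : E, ∃ C : ℝ, ∀ χ ∈ A, |χ x| ≤ C) :
    ∃ p : Seminorm ℝ E, Continuous p ∧ ∀ χ ∈ A, ∀ y, |χ y| ≤ p y := by
  let q : A → Seminorm ℝ E := fun χ ↦ (χ.1 : E →ₗ[ℝ] ℝ).toSeminorm
  have hq (χ : A) (y : E) : q χ y = |χ.1 y| := LinearMap.toSeminorm_apply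
  have hbdd_at (y : E) : BddAbove (Set.range fun χ ↦ q χ y) := by
    obtain ⟨C, hC⟩ := hA y
    exact ⟨C, by rintro _ ⟨χ, rfl⟩; exact (hq χ y).trans_le (hC χ.1 χ.2)⟩
  have hbdd : BddAbove (Set.range q) := Seminorm.bddAbove_range_iff.mpr hbdd_at
  refine ⟨⨆ χ, q χ, ?_, fun χ hχ y ↦ ?_⟩
  · rw [Seminorm.coe_iSup_eq hbdd]
    exact Seminorm.continuous_iSup q (fun χ ↦ χ.1.continuous.norm) hbdd
  · rw [Seminorm.iSup_apply hbdd, ← hq ⟨χ, hχ⟩]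
    exact le_ciSup (hbdd_at y) ⟨χ, hχ⟩

theorem HasSchur.isLimited [BarrelledSpace ℝ E] (hE : HasSchur E) {A : Set (E →L[ℝ] ℝ)}
    (hA : ∀ x : E, ∃ C : ℝ, ∀ χ ∈ A, |χ x| ≤ C) : IsLimited A := by
  intro x hx ε hε
  obtain ⟨p, hp, hpA⟩ := BarrelledSpace.exists_continuous_seminorm_abs_le hA
  have hpx : Tendsto (fun n ↦ p (x n)) atTop (𝓝 0) :=
    (map_zero p ▸ hp.tendsto 0).comp (hE x 0 hx)
  obtain ⟨N, hN⟩ := eventually_atTop.mp (hpx.eventually (ge_mem_nhds hε))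
  exact ⟨N, fun n hn χ hχ ↦ (hpA χ hχ (x n)).trans (hN n hn)⟩

theorem hasSchur_of_isLimited [PolynormableSpace ℝ E]
    (h : ∀ A : Set (E →L[ℝ] ℝ), (∀ x : E, ∃ C : ℝ, ∀ χ ∈ A, |χ x| ≤ C) → IsLimited A) :
    HasSchur E := by
  intro u a hu
  refine ((PolynormableSpace.withSeminorms ℝ E).tendsto_nhds_atTop u a).mpr fun p ε hε ↦ ?_
  let A := {χ : E →L[ℝ] ℝ | ∀ y, |χ y| ≤ p.1 y}
  obtain ⟨N, hN⟩ := h A (fun y ↦ ⟨p.1 y, fun χ hχ ↦ hχ y⟩) _ (tendsto_sub_weakTop_zero hu)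
    (ε / 2) (half_pos hε)
  refine ⟨N, fun n hn ↦ ?_⟩
  obtain ⟨χ, hχA, hχ⟩ := p.1.exists_strongDual_abs_le_of_continuous p.2 (u n - a)
  calc p.1 (u n - a) = |χ (u n - a)| := by rw [hχ, abs_of_nonneg (apply_nonneg _ _)]
    _ ≤ ε / 2 := hN n hn χ hχA
    _ < ε := half_lt_self hε

end

/-- A real barrelled locally convex space has the Schur property if and only
if every σ(E',E)-bounded subset of the dual is an `E`-limited set. -/
theorem barrelled_schur_iff_weakStar_bounded_limited
    (E : Type*) [AddCommGroup E] [Module ℝ E] [TopologicalSpace E]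
    [IsTopologicalAddGroup E] [ContinuousSMul ℝ E] [LocallyConvexSpace ℝ E]
    [BarrelledSpace ℝ E] :
    HasSchur E ↔
      ∀ A : Set (E →L[ℝ] ℝ), (∀ x : E, ∃ C : ℝ, ∀ χ ∈ A, |χ x| ≤ C) →
        ∀ x : ℕ → E, Filter.Tendsto x Filter.atTop (@nhds E (weakTop E) 0) →
          ∀ ε : ℝ, 0 < ε → ∃ N : ℕ, ∀ n ≥ N, ∀ χ ∈ A, |χ (x n)| ≤ ε :=
  ⟨fun hE _ hA ↦ hE.isLimited hA, hasSchur_of_isLimited⟩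
end
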